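/- Let s and t be coprime positive integers and n, m integers with 0 < n < s and 0 < m < t. For every τ ∈ ℂ with Im τ > 0 (writing q^x := exp(2πiτx)), Σ_{k∈ℤ} |k| ( q^{(2stk−nt−ms)²/(4st)} − q^{(2stk−nt+ms)²/(4st)} ) = Σ_{k=0}^{∞} Σ_{k′=0}^{∞} ( q^{Δ_{s−n,m,−2k−2k′−1}} − q^{Δ_{s−n,t−m,−2k−2k′−2}} − q^{Δ_{n,m,−2k−2k′−2}} + q^{Δ_{n,t−m,−2k−2k′−3}} ). (Both sides equal η(τ)·ch_q(𝒳_{n,m}^+)^{h=0}, the singlet character of the (s,t)-log VOA; the right-hand side is the expression obtained from the geometric Atiyah–Bott computation.) -/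

import Mathlib

/-!
Write `g k` for the difference of the two `q`-powers on the left. Each `Δ` on the right is one of
the exponents on the left at index `±(K + 1)`, `K = k + k'`, so the right summand is
`g (K + 1) + g (-(K + 1))`. As `(k, k')` runs over the `K + 1` points of the antidiagonal of `K`,
the double sum is `∑_K (K + 1) (g (K + 1) + g (-(K + 1))) = ∑_{k ∈ ℤ} |k| g k`.
The rearrangements need absolute convergence: up to a constant factor each `q`-power is the
Jacobi theta term `jacobiTheta₂_term k (-c τ) (2 s t τ)`, whose `k`-weighted series converges.
-/

open Complex Finset

/-- `Q τ x = q^x = exp(2πiτx)` for real `x`. -/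
noncomputable def Q (τ : ℂ) (x : ℝ) : ℂ := Complex.exp (2 * Real.pi * Complex.I * τ * x)

/-- The conformal weight `Δ_{a,b,k} = (bs - at + stk)²/(4st)`. -/
noncomputable def Δ (s t a b k : ℤ) : ℝ :=
  ((b * s - a * t + s * t * k : ℤ) : ℝ) ^ 2 / (4 * s * t)

theorem tsum_tsum_add_eq_tsum_succ_nsmul {E : Type*} [NormedAddCommGroup E] [CompleteSpace E]
    {f : ℕ → E} (hf : Summable fun n : ℕ => ((n : ℝ) + 1) * ‖f n‖) :
    ∑' k : ℕ, ∑' k' : ℕ, f (k + k') = ∑' n : ℕ, (n + 1) • f n := by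
  let e := HasAntidiagonal.sigmaAntidiagonalEquivProd (A := ℕ)
  have he : ∀ x, f ((e x).1 + (e x).2) = f x.1 := fun x => by
    simp [e, mem_antidiagonal.1 x.2.2]
  have hsigma : Summable fun x : Σ n : ℕ, antidiagonal n => f x.1 := by
    refine Summable.of_norm ((summable_sigma_of_nonneg fun _ => norm_nonneg _).2
      ⟨fun n => (hasSum_fintype _).summable, ?_⟩)
    simpa [Nat.card_antidiagonal, add_comm] using hf
  have hprod : Summable fun p : ℕ × ℕ => f (p.1 + p.2) :=
    e.summable_iff.1 (by simpa only [Function.comp_def, he] using hsigma)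
  calc ∑' k : ℕ, ∑' k' : ℕ, f (k + k')
      = ∑' p : ℕ × ℕ, f (p.1 + p.2) :=
        (hprod.tsum_prod' fun k => hprod.comp_injective (Prod.mk_right_injective k)).symm
    _ = ∑' x : Σ n : ℕ, antidiagonal n, f x.1 := by
        rw [← e.tsum_eq]; simp only [he]
    _ = ∑' n : ℕ, ∑' _ : antidiagonal n, f n :=
        hsigma.tsum_sigma' fun n => (hasSum_fintype _).summable
    _ = ∑' n : ℕ, (n + 1) • f n := by
        simp [Nat.card_antidiagonal]

theorem tsum_abs_zsmul_eq_tsum_tsum {E : Type*} [NormedAddCommGroup E] [CompleteSpace E]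
    {g : ℤ → E} (hg : Summable fun k : ℤ => |(k : ℝ)| * ‖g k‖) :
    ∑' k : ℤ, |k| • g k = ∑' k : ℕ, ∑' k' : ℕ, (g (k + k' + 1) + g (-(k + k' + 1))) := by
  have hsucc : Function.Injective fun n : ℕ => (n : ℤ) + 1 := fun a b h => by simpa using h
  have hnegsucc : Function.Injective fun n : ℕ => -((n : ℤ) + 1) := fun a b h => by simpa using h
  have hpos : Summable fun n : ℕ => ((n : ℝ) + 1) * ‖g (n + 1)‖ :=
    (hg.comp_injective hsucc).congr fun n => by
      simp only [Function.comp_apply]; push_cast; rw [abs_of_nonneg (by positivity)]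
  have hneg : Summable fun n : ℕ => ((n : ℝ) + 1) * ‖g (-(n + 1))‖ :=
    (hg.comp_injective hnegsucc).congr fun n => by
      simp only [Function.comp_apply]; push_cast; rw [abs_neg, abs_of_nonneg (by positivity)]
  have hpos' : Summable fun n : ℕ => (n + 1) • g (n + 1) :=
    .of_norm_bounded hpos fun n => norm_nsmul_le.trans_eq (by push_cast; rfl)
  have hneg' : Summable fun n : ℕ => (n + 1) • g (-(n + 1)) :=
    .of_norm_bounded hneg fun n => norm_nsmul_le.trans_eq (by push_cast; rfl)
  have hsum : Summable fun n : ℕ => ((n : ℝ) + 1) * ‖g (n + 1) + g (-(n + 1))‖ :=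
    .of_nonneg_of_le (fun n => by positivity)
      (fun n => by rw [← mul_add]; gcongr; exact norm_add_le _ _) (hpos.add hneg)
  have hcoef : ∀ n : ℕ, |(n : ℤ) + 1| = ((n + 1 : ℕ) : ℤ) := fun n => by
    push_cast; exact abs_of_nonneg (by positivity)
  calc ∑' k : ℤ, |k| • g k
      = ∑' n : ℕ, (n + 1) • g (n + 1) + ∑' n : ℕ, (n + 1) • g (-(n + 1)) := by
        rw [tsum_of_add_one_of_neg_add_one (by simpa only [hcoef, natCast_zsmul] using hpos')
          (by simpa only [abs_neg, hcoef, natCast_zsmul] using hneg')]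
        simp only [abs_neg, hcoef, natCast_zsmul, abs_zero, zero_smul, add_zero]
    _ = ∑' n : ℕ, (n + 1) • (g (n + 1) + g (-(n + 1))) := by
        rw [← hpos'.tsum_add hneg']; simp only [smul_add]
    _ = ∑' k : ℕ, ∑' k' : ℕ, (g (k + k' + 1) + g (-(k + k' + 1))) := by
        rw [← tsum_tsum_add_eq_tsum_succ_nsmul hsum]; push_cast; rfl

theorem Q_eq_mul_jacobiTheta₂_term (τ : ℂ) {N : ℝ} (hN : N ≠ 0) (c : ℝ) (k : ℤ) :
    Q τ ((2 * N * k - c) ^ 2 / (4 * N)) =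
      Q τ (c ^ 2 / (4 * N)) * jacobiTheta₂_term k (-c * τ) (2 * N * τ) := by
  have hN' : (N : ℂ) ≠ 0 := ofReal_ne_zero.2 hN
  rw [Q, Q, jacobiTheta₂_term, ← Complex.exp_add]
  congr 1
  push_cast
  field_simp
  ring

theorem summable_abs_mul_norm_Q {τ : ℂ} (hτ : 0 < τ.im) {N : ℝ} (hN : 0 < N) (c : ℝ) :
    Summable fun k : ℤ => |(k : ℝ)| * ‖Q τ ((2 * N * k - c) ^ 2 / (4 * N))‖ := by
  have h := ((summable_jacobiTheta₂'_term_iff (-c * τ) (2 * N * τ)).2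
    (by simpa using mul_pos (mul_pos two_pos hN) hτ)).norm.mul_left
    (‖Q τ (c ^ 2 / (4 * N))‖ / (2 * Real.pi))
  refine h.congr fun k => ?_
  rw [Q_eq_mul_jacobiTheta₂_term τ hN.ne', jacobiTheta₂'_term]
  simp only [norm_mul, norm_ofNat, Complex.norm_real, Complex.norm_I, Complex.norm_intCast,
    Real.norm_eq_abs, abs_of_pos Real.pi_pos]
  field_simp

noncomputable def singletTerm (s t n m : ℤ) (τ : ℂ) (k : ℤ) : ℂ :=
  Q τ (((2 * s * t * k - n * t - m * s : ℤ) : ℝ) ^ 2 / (4 * s * t))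
    - Q τ (((2 * s * t * k - n * t + m * s : ℤ) : ℝ) ^ 2 / (4 * s * t))

theorem summable_abs_mul_norm_singletTerm {s t : ℤ} (hst : 0 < s * t) (n m : ℤ) {τ : ℂ}
    (hτ : 0 < τ.im) :
    Summable fun k : ℤ => |(k : ℝ)| * ‖singletTerm s t n m τ k‖ := by
  have hN : (0 : ℝ) < s * t := by exact_mod_cast hst
  have hQ (c k : ℤ) : ((2 * s * t * k - c : ℤ) : ℝ) ^ 2 / (4 * s * t) =
      (2 * (s * t : ℝ) * k - c) ^ 2 / (4 * (s * t : ℝ)) := by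
    push_cast; ring
  refine .of_nonneg_of_le (fun k => by positivity) (fun k => ?_)
    ((summable_abs_mul_norm_Q hτ hN (n * t + m * s : ℤ)).add
      (summable_abs_mul_norm_Q hτ hN (n * t - m * s : ℤ)))
  rw [singletTerm, ← mul_add, sub_sub, sub_add, ← hQ, ← hQ]
  gcongr
  exact norm_sub_le _ _

theorem Q_Δ_sum_eq_singletTerm_add (s t n m : ℤ) (τ : ℂ) (k k' : ℤ) :
    Q τ (Δ s t (s - n) m (-(2 * k) - 2 * k' - 1))
        - Q τ (Δ s t (s - n) (t - m) (-(2 * k) - 2 * k' - 2))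
        - Q τ (Δ s t n m (-(2 * k) - 2 * k' - 2))
        + Q τ (Δ s t n (t - m) (-(2 * k) - 2 * k' - 3)) =
      singletTerm s t n m τ (k + k' + 1) + singletTerm s t n m τ (-(k + k' + 1)) := by
  have hsq (x y : ℤ) (h : x ^ 2 = y ^ 2) :
      Q τ ((x : ℝ) ^ 2 / (4 * s * t)) = Q τ ((y : ℝ) ^ 2 / (4 * s * t)) := by
    rw [← Int.cast_pow, h, Int.cast_pow]
  rw [Δ, Δ, Δ, Δ, singletTerm, singletTerm,
    hsq (m * s - (s - n) * t + s * t * (-(2 * k) - 2 * k' - 1))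
      (2 * s * t * (k + k' + 1) - n * t - m * s) (by ring),
    hsq ((t - m) * s - (s - n) * t + s * t * (-(2 * k) - 2 * k' - 2))
      (2 * s * t * (k + k' + 1) - n * t + m * s) (by ring),
    hsq (m * s - n * t + s * t * (-(2 * k) - 2 * k' - 2))
      (2 * s * t * -(k + k' + 1) - n * t + m * s) (by ring),
    hsq ((t - m) * s - n * t + s * t * (-(2 * k) - 2 * k' - 3))
      (2 * s * t * -(k + k' + 1) - n * t - m * s) (by ring)]
  ring

theorem statement17_general (s t n m : ℤ) (hs : 0 < s) (ht : 0 < t)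
    (τ : ℂ) (hτ : 0 < τ.im) :
    ∑' k : ℤ, ((|k| : ℤ) : ℂ) *
        (Q τ (((2 * s * t * k - n * t - m * s : ℤ) : ℝ) ^ 2 / (4 * s * t))
          - Q τ (((2 * s * t * k - n * t + m * s : ℤ) : ℝ) ^ 2 / (4 * s * t))) =
      ∑' k : ℕ, ∑' k' : ℕ,
        (Q τ (Δ s t (s - n) m (-(2 * (k : ℤ)) - 2 * (k' : ℤ) - 1))
          - Q τ (Δ s t (s - n) (t - m) (-(2 * (k : ℤ)) - 2 * (k' : ℤ) - 2))
          - Q τ (Δ s t n m (-(2 * (k : ℤ)) - 2 * (k' : ℤ) - 2))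
          + Q τ (Δ s t n (t - m) (-(2 * (k : ℤ)) - 2 * (k' : ℤ) - 3))) := by
  calc _ = ∑' k : ℤ, |k| • singletTerm s t n m τ k := by
        simp only [zsmul_eq_mul]; rfl
    _ = ∑' k : ℕ, ∑' k' : ℕ,
          (singletTerm s t n m τ (k + k' + 1) + singletTerm s t n m τ (-(k + k' + 1))) :=
        tsum_abs_zsmul_eq_tsum_tsum (summable_abs_mul_norm_singletTerm (mul_pos hs ht) n m hτ)
    _ = _ := by simp only [Q_Δ_sum_eq_singletTerm_add]

theorem statement17 (s t n m : ℤ) (hs : 0 < s) (ht : 0 < t) (hst : IsCoprime s t)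
    (hn : 0 < n) (hns : n < s) (hm : 0 < m) (hmt : m < t)
    (τ : ℂ) (hτ : 0 < τ.im) :
    ∑' k : ℤ, ((|k| : ℤ) : ℂ) *
        (Q τ (((2 * s * t * k - n * t - m * s : ℤ) : ℝ) ^ 2 / (4 * s * t))
          - Q τ (((2 * s * t * k - n * t + m * s : ℤ) : ℝ) ^ 2 / (4 * s * t))) =
      ∑' k : ℕ, ∑' k' : ℕ,
        (Q τ (Δ s t (s - n) m (-(2 * (k : ℤ)) - 2 * (k' : ℤ) - 1))
          - Q τ (Δ s t (s - n) (t - m) (-(2 * (k : ℤ)) - 2 * (k' : ℤ) - 2))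
          - Q τ (Δ s t n m (-(2 * (k : ℤ)) - 2 * (k' : ℤ) - 2))
          + Q τ (Δ s t n (t - m) (-(2 * (k : ℤ)) - 2 * (k' : ℤ) - 3))) :=
  statement17_general s t n m hs ht τ hτ
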